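/- Let k be a field, L ⊆ ℤ⁴ the subgroup generated by (1,1,0,−1) and (0,1,1,−1), and let I'_irr ⊆ S = k[x₁,…,x₄,y₁,…,y₄] be the ideal ⟨x₁,x₃,x₄⟩ ∩ ⟨x₂⟩ ∩ ⟨y₁,y₃,y₄⟩ ∩ ⟨y₂⟩ (the irrelevant ideal of X_Σ × X_Σ for the chamber of the effective cone spanned by O(D₂) and O(D₄)). Then for every f ∈ I'_irr, both f · x₁⁻¹y₁ and f · x₃⁻¹y₃ lie in M_{Λ(L)}. In particular, the classes of x₁⁻¹y₁ and x₃⁻¹y₃ in T/M_{Λ(L)} are annihilated by I'_irr. -/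

import Mathlib

/-!
STATEMENT 9: for `L = ⟨(1,1,0,−1), (0,1,1,−1)⟩ ⊆ ℤ⁴` and the irrelevant ideal
`I'_irr = ⟨x₁,x₃,x₄⟩ ∩ ⟨x₂⟩ ∩ ⟨y₁,y₃,y₄⟩ ∩ ⟨y₂⟩` (for the other chamber of the effective
cone), multiplication by `x₁⁻¹y₁` and by `x₃⁻¹y₃` maps `I'_irr` into `M_{Λ(L)}`.
-/

noncomputable section

open MvPolynomial

/-- The Laurent polynomial ring `T = k[x₁^{±1},…,x₄^{±1},y₁^{±1},…,y₄^{±1}]`. -/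
abbrev LaurentT (k : Type*) [Field k] :=
  AddMonoidAlgebra k ((Fin 4 → ℤ) × (Fin 4 → ℤ))

/-- The polynomial ring `S = k[x₁,…,x₄,y₁,…,y₄]`; `Sum.inl i ↦ xᵢ₊₁`, `Sum.inr i ↦ yᵢ₊₁`. -/
abbrev PolyS (k : Type*) [Field k] := MvPolynomial (Fin 4 ⊕ Fin 4) k

/-- `xᵢ₊₁` (0-indexed). -/
def xv (k : Type*) [Field k] (i : Fin 4) : PolyS k := X (Sum.inl i)

/-- `yᵢ₊₁` (0-indexed). -/
def yv (k : Type*) [Field k] (i : Fin 4) : PolyS k := X (Sum.inr i)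

/-- The natural inclusion `S → T`. -/
def incl (k : Type*) [Field k] : PolyS k →+* LaurentT k :=
  MvPolynomial.eval₂Hom (algebraMap k (LaurentT k))
    (Sum.elim
      (fun i => AddMonoidAlgebra.single (Pi.single i 1, 0) (1 : k))
      (fun i => AddMonoidAlgebra.single (0, Pi.single i 1) (1 : k)))

/-- The lattice module `M_{Λ(L)} ⊆ T`. -/
def latticeModule (k : Type*) [Field k] (L : AddSubgroup (Fin 4 → ℤ)) :
    Submodule k (LaurentT k) :=
  Submodule.span k
    { t | ∃ (c d : Fin 4 → ℕ) (u : Fin 4 → ℤ), u ∈ L ∧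
        t = AddMonoidAlgebra.single
          ((fun i => (c i : ℤ)) + u, (fun i => (d i : ℤ)) - u) (1 : k) }

/-- The irrelevant ideal `⟨x₁,x₃,x₄⟩ ∩ ⟨x₂⟩ ∩ ⟨y₁,y₃,y₄⟩ ∩ ⟨y₂⟩` for the chamber of the
effective cone spanned by `O(D₂)` and `O(D₄)`. -/
def irrIdeal' (k : Type*) [Field k] : Ideal (PolyS k) :=
  Ideal.span {xv k 0, xv k 2, xv k 3} ⊓ Ideal.span {xv k 1}
    ⊓ Ideal.span {yv k 0, yv k 2, yv k 3} ⊓ Ideal.span {yv k 1}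

/-- The Laurent monomial `xᵢ⁻¹yᵢ ∈ T` (0-indexed). -/
def xinvy (k : Type*) [Field k] (i : Fin 4) : LaurentT k :=
  AddMonoidAlgebra.single (-(Pi.single i (1 : ℤ)), Pi.single i (1 : ℤ)) (1 : k)

/-!
Multiplication by `incl f` preserves `M_{Λ(L)}`, so the `f` with `incl f * t ∈ M_{Λ(L)}` form an
ideal of `S`. Since `I'_irr ⊆ ⟨x₁,x₃,x₄⟩ ∩ ⟨y₂⟩ = ⟨x₁y₂, x₃y₂, x₄y₂⟩`, it remains to place the six
monomials `xᵢ y₂ xₐ⁻¹ yₐ` in `M_{Λ(L)}`: each is `x^(c+u) y^(d-u)` with `c, d ≥ 0` and `u` one of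
`0`, `±(v₁ - v₂)`, `-v₁`, `-v₂`, where `v₁, v₂` are the generators of `L`.
-/

namespace MvPolynomial

variable {σ R : Type*} [CommSemiring R]

theorem span_X_image_inf_span_X_image_le {s t : Set σ} (hst : Disjoint s t) :
    Ideal.span (X '' s : Set (MvPolynomial σ R)) ⊓ Ideal.span (X '' t)
      ≤ Ideal.span (Set.image2 (fun i j => X i * X j) s t) := by
  classical
  rintro f ⟨hs, ht⟩
  rw [SetLike.mem_coe, mem_ideal_span_X_image] at hs ht
  have hgen : Set.image2 (fun i j => (X i * X j : MvPolynomial σ R)) s t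
      = (fun m => monomial m 1) ''
          Set.image2 (fun i j => Finsupp.single i 1 + Finsupp.single j 1) s t := by
    simp only [Set.image_image2, X, monomial_mul, one_mul]
  rw [hgen, mem_ideal_span_monomial_image]
  intro m hm
  obtain ⟨i, hi, hmi⟩ := hs m hm
  obtain ⟨j, hj, hmj⟩ := ht m hm
  refine ⟨_, ⟨i, hi, j, hj, rfl⟩, fun v => ?_⟩
  have hij : i ≠ j := hst.ne_of_mem hi hj
  simp only [Finsupp.add_apply, Finsupp.single_apply]
  split_ifs <;> grind

end MvPolynomial

open AddMonoidAlgebra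

section

variable {k : Type*} [Field k] {L : AddSubgroup (Fin 4 → ℤ)}

theorem single_mem_latticeModule {a b u : Fin 4 → ℤ} (hu : u ∈ L)
    (hle : ∀ i, u i ≤ a i ∧ -u i ≤ b i) : single (a, b) (1 : k) ∈ latticeModule k L := by
  refine Submodule.subset_span
    ⟨fun i => (a i - u i).toNat, fun i => (b i + u i).toNat, u, hu, ?_⟩
  congr 2 <;> funext i <;> simp only [Pi.add_apply, Pi.sub_apply] <;> grind

theorem single_mul_mem_latticeModule {p q : Fin 4 → ℤ} (hp : 0 ≤ p) (hq : 0 ≤ q)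
    {t : LaurentT k} (ht : t ∈ latticeModule k L) :
    single (p, q) (1 : k) * t ∈ latticeModule k L := by
  induction ht using Submodule.span_induction with
  | mem t ht =>
    obtain ⟨c, d, u, hu, rfl⟩ := ht
    rw [single_mul_single, one_mul]
    refine single_mem_latticeModule hu fun i => ⟨?_, ?_⟩
    · have := hp i
      simp only [Pi.add_apply, Pi.zero_apply] at this ⊢
      omega
    · have := hq i
      simp only [Pi.add_apply, Pi.sub_apply, Pi.zero_apply] at this ⊢
      omega
  | zero => simp
  | add x y _ _ hx hy => rw [mul_add]; exact add_mem hx hy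
  | smul a x _ hx => rw [mul_smul_comm]; exact Submodule.smul_mem _ a hx

theorem incl_X_inl (i : Fin 4) : incl k (X (Sum.inl i)) = single (Pi.single i 1, 0) 1 := by
  simp [incl]

theorem incl_X_inr (i : Fin 4) : incl k (X (Sum.inr i)) = single (0, Pi.single i 1) 1 := by
  simp [incl]

theorem incl_mul_mem_latticeModule (f : PolyS k) {t : LaurentT k}
    (ht : t ∈ latticeModule k L) : incl k f * t ∈ latticeModule k L := by
  induction f using MvPolynomial.induction_on generalizing t with
  | C a =>
    rw [incl, eval₂Hom_C, ← Algebra.smul_def]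
    exact Submodule.smul_mem _ a ht
  | add p q hp hq => rw [map_add, add_mul]; exact add_mem (hp ht) (hq ht)
  | mul_X p v hp =>
    rw [map_mul, mul_assoc]
    refine hp ?_
    rcases v with i | i
    · rw [incl_X_inl]
      exact single_mul_mem_latticeModule (Pi.single_nonneg.2 zero_le_one) le_rfl ht
    · rw [incl_X_inr]
      exact single_mul_mem_latticeModule le_rfl (Pi.single_nonneg.2 zero_le_one) ht

variable (k L) in
def latticeModuleColon (t : LaurentT k) : Ideal (PolyS k) where
  carrier := {f | incl k f * t ∈ latticeModule k L}
  add_mem' {f g} hf hg := by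
    simp only [Set.mem_ofPred_eq, map_add, add_mul] at *
    exact add_mem hf hg
  zero_mem' := by simp
  smul_mem' c f hf := by
    simp only [Set.mem_ofPred_eq, smul_eq_mul, map_mul, mul_assoc] at *
    exact incl_mul_mem_latticeModule c hf

theorem incl_X_inl_mul_X_inr_mul_xinvy (i j a : Fin 4) :
    incl k (X (Sum.inl i) * X (Sum.inr j)) * xinvy k a
      = single (Pi.single i 1 - Pi.single a 1, Pi.single j 1 + Pi.single a 1) 1 := by
  rw [map_mul, incl_X_inl, incl_X_inr, xinvy, single_mul_single, single_mul_single, one_mul,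
    one_mul, Prod.mk_add_mk, Prod.mk_add_mk, add_zero, zero_add, sub_eq_add_neg,
    add_comm _ (Pi.single a 1)]

theorem irrIdeal'_le_span :
    irrIdeal' k ≤ Ideal.span (Set.image2 (fun i j => X i * X j)
      (Sum.inl '' {0, 2, 3}) {Sum.inr 1}) := by
  have hx : ({xv k 0, xv k 2, xv k 3} : Set (PolyS k)) = X '' (Sum.inl '' {0, 2, 3}) := by
    simp [xv, Set.image_insert_eq]
  have hy : ({yv k 1} : Set (PolyS k)) = X '' {Sum.inr 1} := by simp [yv]
  refine le_trans ?_ (span_X_image_inf_span_X_image_le (by simp))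
  rw [irrIdeal', hx, hy]
  exact inf_le_inf (inf_le_left.trans inf_le_left) le_rfl

local notation "L₀" => AddSubgroup.closure ({![1, 1, 0, -1], ![0, 1, 1, -1]} : Set (Fin 4 → ℤ))

theorem span_le_latticeModuleColon_xinvy {a : Fin 4} (ha : a ∈ ({0, 2} : Set (Fin 4))) :
    Ideal.span (Set.image2 (fun i j => X i * X j) (Sum.inl '' {0, 2, 3}) {Sum.inr 1})
      ≤ latticeModuleColon k L₀ (xinvy k a) := by
  rw [Ideal.span_le]
  rintro _ ⟨_, ⟨i, hi, rfl⟩, _, rfl, rfl⟩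
  change incl k _ * xinvy k a ∈ latticeModule k L₀
  rw [incl_X_inl_mul_X_inr_mul_xinvy]
  have h₁ : ![1, 1, 0, -1] ∈ L₀ := AddSubgroup.subset_closure (by simp)
  have h₂ : ![0, 1, 1, -1] ∈ L₀ := AddSubgroup.subset_closure (by simp)
  rcases hi with rfl | rfl | rfl <;> rcases ha with rfl | rfl
  · exact single_mem_latticeModule (zero_mem _) (by decide)
  · exact single_mem_latticeModule (sub_mem h₁ h₂) (by decide)
  · exact single_mem_latticeModule (sub_mem h₂ h₁) (by decide)
  · exact single_mem_latticeModule (zero_mem _) (by decide)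
  · exact single_mem_latticeModule (neg_mem h₁) (by decide)
  · exact single_mem_latticeModule (neg_mem h₂) (by decide)

end

/-- For every `f ∈ I'_irr`, both `f · x₁⁻¹y₁` and `f · x₃⁻¹y₃` lie in `M_{Λ(L)}`. -/
theorem mul_mem_latticeModule_other_chamber (k : Type*) [Field k] :
    ∀ f ∈ irrIdeal' k,
      incl k f * xinvy k 0
          ∈ latticeModule k (AddSubgroup.closure {![1, 1, 0, -1], ![0, 1, 1, -1]})
        ∧ incl k f * xinvy k 2
          ∈ latticeModule k (AddSubgroup.closure {![1, 1, 0, -1], ![0, 1, 1, -1]}) := by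
  intro f hf
  have hf' := irrIdeal'_le_span hf
  exact ⟨span_le_latticeModuleColon_xinvy (by simp) hf',
    span_le_latticeModuleColon_xinvy (by simp) hf'⟩

end
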